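/- Let 1/2 ≤ m < 1. Then lim_{K→0⁺} √2 √(log(1/K)) · [(U_{1/K})^{-1}(m) - N^{-1}(m)] = 1. -/

import Mathlib

open Real Set Filter

noncomputable def stdNormalCDF (x : ℝ) : ℝ :=
  (1 / Real.sqrt (2 * Real.pi)) * ∫ y in Set.Iic x, Real.exp (-(y ^ 2) / 2)

noncomputable def U (K x : ℝ) : ℝ :=
  stdNormalCDF x - (1 / (2 * Real.sqrt Real.pi * Real.sqrt (Real.log K))) * Real.exp (-(x ^ 2) / 2)

/-! Put `s = √2 √(log (1/K))`. Since `√(2π) s = 2 √π √(log (1/K))`, the equation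
`U_{1/K}(x) = m = N(A)` reads `N(x) - N(A) = φ(x) / s`, with `φ` the Gaussian density. As
`m ≥ 1/2` we have `A ≥ 0`, so `φ` is decreasing on `[A, x]` and the mean value theorem gives
`φ(x) (x - A) ≤ φ(x) / s ≤ φ(A) (x - A)`, i.e. `φ(x) / φ(A) ≤ s (x - A) ≤ 1`. The upper bound
forces `x → A` as `s → ∞`, and then the lower bound tends to `1`. -/

open MeasureTheory Topology

lemma exp_neg_sq_div_two (x : ℝ) : exp (-(x ^ 2) / 2) = exp (-(1 / 2) * x ^ 2) := by
  ring_nf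

lemma integrable_exp_neg_sq_div_two : Integrable fun y : ℝ => exp (-(y ^ 2) / 2) := by
  simpa only [exp_neg_sq_div_two] using integrable_exp_neg_mul_sq (b := 1 / 2) (by norm_num)

lemma hasDerivAt_stdNormalCDF (x : ℝ) :
    HasDerivAt stdNormalCDF ((1 / √(2 * π)) * exp (-(x ^ 2) / 2)) x := by
  have hsplit : stdNormalCDF = fun z => (1 / √(2 * π)) *
      ((∫ y in Iic 0, exp (-(y ^ 2) / 2)) + ∫ y in (0 : ℝ)..z, exp (-(y ^ 2) / 2)) := by
    funext z
    rw [stdNormalCDF, ← intervalIntegral.integral_Iic_sub_Iic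
      integrable_exp_neg_sq_div_two.integrableOn integrable_exp_neg_sq_div_two.integrableOn]
    ring
  rw [hsplit]
  have hcont : Continuous fun y : ℝ => exp (-(y ^ 2) / 2) := by fun_prop
  exact ((hcont.integral_hasStrictDerivAt 0 x).hasDerivAt.const_add _).const_mul _

lemma differentiable_stdNormalCDF : Differentiable ℝ stdNormalCDF :=
  fun x => (hasDerivAt_stdNormalCDF x).differentiableAt

lemma stdNormalCDF_strictMono : StrictMono stdNormalCDF :=
  strictMono_of_deriv_pos fun x => by
    rw [(hasDerivAt_stdNormalCDF x).deriv]
    positivity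

lemma stdNormalCDF_zero : stdNormalCDF 0 = 1 / 2 := by
  have hIoi : ∫ y in Ioi (0 : ℝ), exp (-(y ^ 2) / 2) = √(2 * π) / 2 := by
    simp only [exp_neg_sq_div_two, integral_gaussian_Ioi]
    norm_num [div_div_eq_mul_div, mul_comm]
  have hIic : ∫ y in Iic (0 : ℝ), exp (-(y ^ 2) / 2) = √(2 * π) / 2 := by
    rw [← hIoi]
    have h := integral_comp_neg_Iic 0 fun y : ℝ => exp (-(y ^ 2) / 2)
    simp only [neg_sq, neg_zero] at h
    exact h
  have : 0 < √(2 * π) := by positivity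
  rw [stdNormalCDF, hIic]
  field_simp

lemma stdNormalCDF_sub_le {a b : ℝ} (ha : 0 ≤ a) (hab : a ≤ b) :
    stdNormalCDF b - stdNormalCDF a ≤ (1 / √(2 * π)) * exp (-(a ^ 2) / 2) * (b - a) := by
  refine (convex_Icc a b).image_sub_le_mul_sub_of_deriv_le
    differentiable_stdNormalCDF.continuous.continuousOn
    differentiable_stdNormalCDF.differentiableOn (fun x hx => ?_) a (left_mem_Icc.2 hab) b
    (right_mem_Icc.2 hab) hab
  rw [interior_Icc] at hx
  rw [(hasDerivAt_stdNormalCDF x).deriv]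
  gcongr
  nlinarith [hx.1]

lemma le_stdNormalCDF_sub {a b : ℝ} (ha : 0 ≤ a) (hab : a ≤ b) :
    (1 / √(2 * π)) * exp (-(b ^ 2) / 2) * (b - a) ≤ stdNormalCDF b - stdNormalCDF a := by
  refine (convex_Icc a b).mul_sub_le_image_sub_of_le_deriv
    differentiable_stdNormalCDF.continuous.continuousOn
    differentiable_stdNormalCDF.differentiableOn (fun x hx => ?_) a (left_mem_Icc.2 hab) b
    (right_mem_Icc.2 hab) hab
  rw [interior_Icc] at hx
  rw [(hasDerivAt_stdNormalCDF x).deriv]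
  gcongr
  exacts [by linarith [hx.1], hx.2.le]

lemma U_eq (K x : ℝ) :
    U K x = stdNormalCDF x - 1 / (√(2 * π) * (√2 * √(log K))) * exp (-(x ^ 2) / 2) := by
  have h : √(2 * π) * √2 = 2 * √π := by
    rw [sqrt_mul zero_le_two, mul_right_comm, mul_self_sqrt zero_le_two]
  rw [U, ← mul_assoc, h]

section PerturbedQuantile

variable {A x s : ℝ}

lemma lt_of_stdNormalCDF_sub_eq (hs : 0 < s)
    (h : stdNormalCDF x - stdNormalCDF A = 1 / (√(2 * π) * s) * exp (-(x ^ 2) / 2)) : A < x :=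
  stdNormalCDF_strictMono.lt_iff_lt.1 <| sub_pos.1 <| h ▸ by positivity

lemma mul_sub_le_one_of_stdNormalCDF_sub_eq (hA : 0 ≤ A) (hs : 0 < s)
    (h : stdNormalCDF x - stdNormalCDF A = 1 / (√(2 * π) * s) * exp (-(x ^ 2) / 2)) :
    s * (x - A) ≤ 1 := by
  have hAx := lt_of_stdNormalCDF_sub_eq hs h
  calc s * (x - A)
      = √(2 * π) * s / exp (-(x ^ 2) / 2) *
          (1 / √(2 * π) * exp (-(x ^ 2) / 2) * (x - A)) := by field_simp
    _ ≤ √(2 * π) * s / exp (-(x ^ 2) / 2) * (1 / (√(2 * π) * s) * exp (-(x ^ 2) / 2)) := by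
        refine mul_le_mul_of_nonneg_left ?_ (by positivity)
        exact h ▸ le_stdNormalCDF_sub hA hAx.le
    _ = 1 := by field_simp

lemma exp_le_mul_sub_of_stdNormalCDF_sub_eq (hA : 0 ≤ A) (hs : 0 < s)
    (h : stdNormalCDF x - stdNormalCDF A = 1 / (√(2 * π) * s) * exp (-(x ^ 2) / 2)) :
    exp ((A ^ 2 - x ^ 2) / 2) ≤ s * (x - A) := by
  have hAx := lt_of_stdNormalCDF_sub_eq hs h
  rw [show (A ^ 2 - x ^ 2) / 2 = -(x ^ 2) / 2 - -(A ^ 2) / 2 by ring, exp_sub,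
    div_le_iff₀ (exp_pos _)]
  calc exp (-(x ^ 2) / 2)
      = √(2 * π) * s * (1 / (√(2 * π) * s) * exp (-(x ^ 2) / 2)) := by field_simp
    _ ≤ √(2 * π) * s * (1 / √(2 * π) * exp (-(A ^ 2) / 2) * (x - A)) := by
        refine mul_le_mul_of_nonneg_left ?_ (by positivity)
        exact h ▸ stdNormalCDF_sub_le hA hAx.le
    _ = s * (x - A) * exp (-(A ^ 2) / 2) := by field_simp

end PerturbedQuantile

lemma tendsto_mul_sub_of_stdNormalCDF_sub_eq {α : Type*} {l : Filter α} {A : ℝ}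
    {x s : α → ℝ} (hA : 0 ≤ A) (hs : Tendsto s l atTop)
    (h : ∀ᶠ t in l, stdNormalCDF (x t) - stdNormalCDF A =
      1 / (√(2 * π) * s t) * exp (-(x t ^ 2) / 2)) :
    Tendsto (fun t => s t * (x t - A)) l (𝓝 1) := by
  have hpos : ∀ᶠ t in l, 0 < s t := hs.eventually_gt_atTop 0
  have hx : Tendsto x l (𝓝 A) := by
    have hupper : Tendsto (fun t => A + (s t)⁻¹) l (𝓝 A) := by
      simpa using tendsto_const_nhds.add hs.inv_tendsto_atTop
    refine tendsto_of_tendsto_of_tendsto_of_le_of_le' tendsto_const_nhds hupper ?_ ?_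
    · filter_upwards [hpos, h] with t hst ht using (lt_of_stdNormalCDF_sub_eq hst ht).le
    · filter_upwards [hpos, h] with t hst ht
      have := (le_inv_mul_iff₀ hst).2 (mul_sub_le_one_of_stdNormalCDF_sub_eq hA hst ht)
      rw [mul_one] at this
      linarith
  have hexp : Tendsto (fun t => exp ((A ^ 2 - x t ^ 2) / 2)) l (𝓝 1) := by
    have := (((hx.pow 2).const_sub (A ^ 2)).div_const 2).rexp
    rwa [sub_self, zero_div, exp_zero] at this
  refine tendsto_of_tendsto_of_tendsto_of_le_of_le' hexp tendsto_const_nhds ?_ ?_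
  · filter_upwards [hpos, h] with t hst ht using exp_le_mul_sub_of_stdNormalCDF_sub_eq hA hst ht
  · filter_upwards [hpos, h] with t hst ht using mul_sub_le_one_of_stdNormalCDF_sub_eq hA hst ht

lemma tendsto_sqrt_two_mul_sqrt_log_one_div :
    Tendsto (fun K => √2 * √(log (1 / K))) (𝓝[>] 0) atTop := by
  have hinv : Tendsto (fun K : ℝ => 1 / K) (𝓝[>] 0) atTop := by
    simpa only [one_div] using tendsto_inv_nhdsGT_zero
  exact (tendsto_sqrt_atTop.comp (tendsto_log_atTop.comp hinv)).const_mul_atTop (by positivity)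

theorem limit_of_inverse_difference_general (m A : ℝ) (hm₁ : 1 / 2 ≤ m)
    (hA : stdNormalCDF A = m) (f : ℝ → ℝ)
    (hf : ∀ K : ℝ, 0 < K → K < 1 →
      -(Real.sqrt 2 * Real.sqrt (Real.log (1 / K))) ≤ f K ∧ U (1 / K) (f K) = m) :
    Filter.Tendsto (fun K => Real.sqrt 2 * Real.sqrt (Real.log (1 / K)) * (f K - A))
      (nhdsWithin 0 (Set.Ioi 0)) (nhds 1) := by
  have hA₀ : 0 ≤ A :=
    stdNormalCDF_strictMono.le_iff_le.1 (by rw [stdNormalCDF_zero, hA]; exact hm₁)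
  refine tendsto_mul_sub_of_stdNormalCDF_sub_eq hA₀ tendsto_sqrt_two_mul_sqrt_log_one_div ?_
  filter_upwards [Ioo_mem_nhdsGT one_pos] with K hK
  have hU := (hf K hK.1 hK.2).2
  rw [U_eq] at hU
  rw [hA, ← hU]
  ring

/-- for 1/2 ≤ m < 1,
`lim_{K→0⁺} √2 √(log(1/K)) · ((U_{1/K})⁻¹(m) - N⁻¹(m)) = 1`, where `f K = (U_{1/K})⁻¹(m)` and
`A = N⁻¹(m)` are expressed via witnesses. -/
theorem limit_of_inverse_difference (m A : ℝ) (hm₁ : 1 / 2 ≤ m) (hm₂ : m < 1)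
    (hA : stdNormalCDF A = m) (f : ℝ → ℝ)
    (hf : ∀ K : ℝ, 0 < K → K < 1 →
      -(Real.sqrt 2 * Real.sqrt (Real.log (1 / K))) ≤ f K ∧ U (1 / K) (f K) = m) :
    Filter.Tendsto (fun K => Real.sqrt 2 * Real.sqrt (Real.log (1 / K)) * (f K - A))
      (nhdsWithin 0 (Set.Ioi 0)) (nhds 1) :=
  limit_of_inverse_difference_general m A hm₁ hA f hf
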